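/- In the construction L(M) of Algorithm 1 from a strictly serializable strongly progressive TM M, every process incurs only O(1) RMRs in the distributed shared memory (DSM) model per execution of the Entry and Exit operations, apart from the RMRs incurred by the operations of M itself: in particular, the register Lock[p_i][p_j] on which process p_i spins is local to p_i, so the spin loop incurs no RMRs in the DSM model. -/
import Mathlib


/-!
A formal model of the mutual exclusion implementation `L(M)` (Algorithm 1 of
Kuznetsov & Ravi, "Progressive Transactional Memory in Time and Space"), built
from a strictly serializable, strongly progressive TM implementation `M` that
accesses the single t-object `X`.

Since `M` is strictly serializable and strongly progressive and every
transaction of `L(M)` accesses only the single t-object `X`, each committed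
transaction of `M` takes effect as one atomic step that reads the previous
value of `X` and writes the identity `[p_i, face_i]` to `X`, whereas an aborted
transaction has no effect (the process retries the while loop).  The model
below represents this: the step `transSuccess` is a committed transaction of
the TM `M` (returning the previous value of `X`) and `transAbort` is an aborted
one.  Everything else of Algorithm 1 (the registers `Done`, `Succ`, `Lock` and
the control flow of the `Entry` and `Exit` operations) is modelled faithfully,
one line per step.

A process is *in the critical section* when its Enter operation has returned
`ok` and it has not yet invoked Exit, i.e., its program counter is `crit`.
-/

/-- Program locations of a process executing Algorithm 1. -/
inductive Loc : Type where
  | idle        -- outside Entry/Exit (remainder section)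
  | entry1      -- about to write Done[p, face] := false
  | entry2      -- about to write Succ[p, face] := ⊥
  | trans       -- in the while loop executing the transaction func() on M
  | lockPred    -- about to write Lock[p][prev.pid] := locked
  | setSucc     -- about to write Succ[prev] := p
  | checkDone   -- about to read Done[prev]
  | spin        -- spinning on Lock[p][prev.pid]
  | crit        -- in the critical section (Enter returned ok)
  | exit1       -- Exit invoked; about to write Done[p, face] := true
  | exit2       -- about to write Lock[Succ[p, face]][p] := unlocked
deriving DecidableEq

/-- A configuration of `L(M)` for `n` processes: the control state and local
variables of each process, and the values of the shared objects (`X`, `Done`,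
`Succ`, `Lock`).  `lock p q = true` means the register `Lock[p][q]` is
`locked`. -/
structure Conf (n : ℕ) where
  pc : Fin n → Loc
  face : Fin n → Bool
  prev : Fin n → Option (Fin n × Bool)
  X : Option (Fin n × Bool)
  done : Fin n → Bool → Bool
  succ : Fin n → Bool → Option (Fin n)
  lock : Fin n → Fin n → Bool

/-- The initial configuration. -/
def initConf (n : ℕ) : Conf n :=
  { pc := fun _ => Loc.idle
    face := fun _ => false
    prev := fun _ => none
    X := none
    done := fun _ _ => false
    succ := fun _ _ => none
    lock := fun _ _ => false }

/-- One step of process `p` in `L(M)`. -/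
inductive MStep (n : ℕ) : Fin n → Conf n → Conf n → Prop where
  /-- `p` invokes Enter: it adopts a new identity `face_p := 1 − face_p`. -/
  | invokeEnter (c : Conf n) (p : Fin n) :
      c.pc p = Loc.idle →
      MStep n p c { c with pc := Function.update c.pc p Loc.entry1,
                           face := Function.update c.face p (!c.face p) }
  /-- no-op step of an idle process (remainder section). -/
  | idleSkip (c : Conf n) (p : Fin n) :
      c.pc p = Loc.idle → MStep n p c c
  /-- Entry line 2: `Done[p, face_p].write(false)`. -/
  | doneWrite (c : Conf n) (p : Fin n) :
      c.pc p = Loc.entry1 →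
      MStep n p c { c with pc := Function.update c.pc p Loc.entry2,
                           done := Function.update c.done p
                             (Function.update (c.done p) (c.face p) false) }
  /-- Entry line 3: `Succ[p, face_p].write(⊥)`. -/
  | succInit (c : Conf n) (p : Fin n) :
      c.pc p = Loc.entry2 →
      MStep n p c { c with pc := Function.update c.pc p Loc.trans,
                           succ := Function.update c.succ p
                             (Function.update (c.succ p) (c.face p) none) }
  /-- The transaction `func()` on `M` aborts (returns `false`); `p` retries. -/
  | transAbort (c : Conf n) (p : Fin n) :
      c.pc p = Loc.trans → MStep n p c c
  /-- The transaction `func()` on `M` commits: atomically `prev_p := X;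
  X := [p, face_p]`.  If `prev_p = ⊥`, `p` enters the critical section. -/
  | transSuccess (c : Conf n) (p : Fin n) :
      c.pc p = Loc.trans →
      MStep n p c { c with
        pc := Function.update c.pc p (if c.X = none then Loc.crit else Loc.lockPred),
        prev := Function.update c.prev p c.X,
        X := some (p, c.face p) }
  /-- `Lock[p][prev.pid].write(locked)`. -/
  | lockWrite (c : Conf n) (p q : Fin n) (f : Bool) :
      c.pc p = Loc.lockPred → c.prev p = some (q, f) →
      MStep n p c { c with pc := Function.update c.pc p Loc.setSucc,
                           lock := Function.update c.lock p
                             (Function.update (c.lock p) q true) }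
  /-- `Succ[prev].write(p)`. -/
  | succWrite (c : Conf n) (p q : Fin n) (f : Bool) :
      c.pc p = Loc.setSucc → c.prev p = some (q, f) →
      MStep n p c { c with pc := Function.update c.pc p Loc.checkDone,
                           succ := Function.update c.succ q
                             (Function.update (c.succ q) f (some p)) }
  /-- read `Done[prev] = true`: `p` enters the critical section. -/
  | doneCheckTrue (c : Conf n) (p q : Fin n) (f : Bool) :
      c.pc p = Loc.checkDone → c.prev p = some (q, f) → c.done q f = true →
      MStep n p c { c with pc := Function.update c.pc p Loc.crit }
  /-- read `Done[prev] = false`: `p` spins on `Lock[p][prev.pid]`. -/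
  | doneCheckFalse (c : Conf n) (p q : Fin n) (f : Bool) :
      c.pc p = Loc.checkDone → c.prev p = some (q, f) → c.done q f = false →
      MStep n p c { c with pc := Function.update c.pc p Loc.spin }
  /-- spin: `Lock[p][prev.pid]` is still `locked`. -/
  | spinLocked (c : Conf n) (p q : Fin n) (f : Bool) :
      c.pc p = Loc.spin → c.prev p = some (q, f) → c.lock p q = true →
      MStep n p c c
  /-- spin: `Lock[p][prev.pid]` is `unlocked`; `p` enters the critical section. -/
  | spinUnlocked (c : Conf n) (p q : Fin n) (f : Bool) :
      c.pc p = Loc.spin → c.prev p = some (q, f) → c.lock p q = false →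
      MStep n p c { c with pc := Function.update c.pc p Loc.crit }
  /-- no-op step of a process inside the critical section. -/
  | critSkip (c : Conf n) (p : Fin n) :
      c.pc p = Loc.crit → MStep n p c c
  /-- `p` invokes Exit. -/
  | invokeExit (c : Conf n) (p : Fin n) :
      c.pc p = Loc.crit →
      MStep n p c { c with pc := Function.update c.pc p Loc.exit1 }
  /-- Exit line 1: `Done[p, face_p].write(true)`. -/
  | exitDone (c : Conf n) (p : Fin n) :
      c.pc p = Loc.exit1 →
      MStep n p c { c with pc := Function.update c.pc p Loc.exit2,
                           done := Function.update c.done p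
                             (Function.update (c.done p) (c.face p) true) }
  /-- Exit line 2: `Lock[Succ[p, face_p]][p].write(unlocked)`; Exit returns. -/
  | exitUnlockSome (c : Conf n) (p q : Fin n) :
      c.pc p = Loc.exit2 → c.succ p (c.face p) = some q →
      MStep n p c { c with pc := Function.update c.pc p Loc.idle,
                           lock := Function.update c.lock q
                             (Function.update (c.lock q) p false) }
  /-- Exit line 2 with no registered successor; Exit returns. -/
  | exitUnlockNone (c : Conf n) (p : Fin n) :
      c.pc p = Loc.exit2 → c.succ p (c.face p) = none →
      MStep n p c { c with pc := Function.update c.pc p Loc.idle }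

/-- Configurations reachable in some execution of `L(M)`. -/
def Reachable (n : ℕ) (c : Conf n) : Prop :=
  Relation.ReflTransGen (fun a b => ∃ p, MStep n p a b) (initConf n) c

/-- Process `p` is in the critical section: its Enter has returned `ok` and it
has not invoked Exit. -/
def inCS {n : ℕ} (c : Conf n) (p : Fin n) : Prop := c.pc p = Loc.crit

/-- An infinite execution of `L(M)`: at time `i` the scheduled process
`sched i` takes one step. -/
structure MRun (n : ℕ) where
  conf : ℕ → Conf n
  sched : ℕ → Fin n
  start : conf 0 = initConf n
  steps : ∀ i, MStep n (sched i) (conf i) (conf (i + 1))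

/-- Every process takes infinitely many steps in `R`. -/
def fairRun {n : ℕ} (R : MRun n) : Prop :=
  ∀ p : Fin n, ∀ i, ∃ j, i ≤ j ∧ R.sched j = p

/-- Process `p` invokes Enter at time `i` of the run `R`. -/
def enterInvokedAt {n : ℕ} (R : MRun n) (i : ℕ) (p : Fin n) : Prop :=
  R.sched i = p ∧ (R.conf i).pc p = Loc.idle ∧ (R.conf (i + 1)).pc p = Loc.entry1

/-- At time `i` the transaction `func()` of the scheduled process commits
(returns the previous value of `X` rather than aborting), terminating its
while loop. -/
def transSuccessAt {n : ℕ} (R : MRun n) (i : ℕ) : Prop :=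
  (R.conf i).pc (R.sched i) = Loc.trans ∧
  (R.conf (i + 1)).pc (R.sched i) ≠ Loc.trans

/-- Formal counterpart, at the level of `L(M)`, of the hypothesis that the TM
`M` is strongly progressive: whenever some process is executing the transaction
`func()` on the single t-object `X`, not all the concurrent transactions abort,
i.e., some process's transaction eventually commits. -/
def stronglyProgressiveRun {n : ℕ} (R : MRun n) : Prop :=
  ∀ i, (∃ p, (R.conf i).pc p = Loc.trans) → ∃ j, i ≤ j ∧ transSuccessAt R j

/-! ### Register-level accesses of the steps of Algorithm 1, for RMR accounting.

Each step of `L(M)` is annotated with the list of shared registers it accesses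
(and whether the access is a read or a write).  The steps implementing the
transaction `func()` on the TM `M` (`transAbort`/`transSuccess`) carry no
register accesses here: their memory accesses belong to `M` and their RMR cost
is accounted to `M` ("apart from the RMRs incurred by the operations of `M`
itself"). -/

/-- The shared registers of `L(M)`: the t-object `X` (implemented by `M`) and
the registers `Done[p,f]`, `Succ[p,f]`, `Lock[p][q]`. -/
inductive Reg (n : ℕ) : Type where
  | X : Reg n
  | doneR : Fin n → Bool → Reg n
  | succR : Fin n → Bool → Reg n
  | lockR : Fin n → Fin n → Reg n
deriving DecidableEq

/-- A register access: a read or a write of a register. -/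
inductive RAcc (n : ℕ) : Type where
  | rd : Reg n → RAcc n
  | wr : Reg n → RAcc n
deriving DecidableEq

def RAcc.reg {n : ℕ} : RAcc n → Reg n
  | .rd r => r
  | .wr r => r

/-- One step of process `p`, annotated with its register accesses. -/
inductive AStep (n : ℕ) : Fin n → List (RAcc n) → Conf n → Conf n → Prop where
  | invokeEnter (c : Conf n) (p : Fin n) :
      c.pc p = Loc.idle →
      AStep n p [] c { c with pc := Function.update c.pc p Loc.entry1,
                              face := Function.update c.face p (!c.face p) }
  | idleSkip (c : Conf n) (p : Fin n) :
      c.pc p = Loc.idle → AStep n p [] c c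
  | doneWrite (c : Conf n) (p : Fin n) :
      c.pc p = Loc.entry1 →
      AStep n p [RAcc.wr (Reg.doneR p (c.face p))] c
        { c with pc := Function.update c.pc p Loc.entry2,
                 done := Function.update c.done p
                   (Function.update (c.done p) (c.face p) false) }
  | succInit (c : Conf n) (p : Fin n) :
      c.pc p = Loc.entry2 →
      AStep n p [RAcc.wr (Reg.succR p (c.face p))] c
        { c with pc := Function.update c.pc p Loc.trans,
                 succ := Function.update c.succ p
                   (Function.update (c.succ p) (c.face p) none) }
  /-- aborted transaction of `M`; its accesses are accounted to `M`. -/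
  | transAbort (c : Conf n) (p : Fin n) :
      c.pc p = Loc.trans → AStep n p [] c c
  /-- committed transaction of `M`; its accesses are accounted to `M`. -/
  | transSuccess (c : Conf n) (p : Fin n) :
      c.pc p = Loc.trans →
      AStep n p [] c { c with
        pc := Function.update c.pc p (if c.X = none then Loc.crit else Loc.lockPred),
        prev := Function.update c.prev p c.X,
        X := some (p, c.face p) }
  | lockWrite (c : Conf n) (p q : Fin n) (f : Bool) :
      c.pc p = Loc.lockPred → c.prev p = some (q, f) →
      AStep n p [RAcc.wr (Reg.lockR p q)] c
        { c with pc := Function.update c.pc p Loc.setSucc,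
                 lock := Function.update c.lock p
                   (Function.update (c.lock p) q true) }
  | succWrite (c : Conf n) (p q : Fin n) (f : Bool) :
      c.pc p = Loc.setSucc → c.prev p = some (q, f) →
      AStep n p [RAcc.wr (Reg.succR q f)] c
        { c with pc := Function.update c.pc p Loc.checkDone,
                 succ := Function.update c.succ q
                   (Function.update (c.succ q) f (some p)) }
  | doneCheckTrue (c : Conf n) (p q : Fin n) (f : Bool) :
      c.pc p = Loc.checkDone → c.prev p = some (q, f) → c.done q f = true →
      AStep n p [RAcc.rd (Reg.doneR q f)] c
        { c with pc := Function.update c.pc p Loc.crit }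
  | doneCheckFalse (c : Conf n) (p q : Fin n) (f : Bool) :
      c.pc p = Loc.checkDone → c.prev p = some (q, f) → c.done q f = false →
      AStep n p [RAcc.rd (Reg.doneR q f)] c
        { c with pc := Function.update c.pc p Loc.spin }
  | spinLocked (c : Conf n) (p q : Fin n) (f : Bool) :
      c.pc p = Loc.spin → c.prev p = some (q, f) → c.lock p q = true →
      AStep n p [RAcc.rd (Reg.lockR p q)] c c
  | spinUnlocked (c : Conf n) (p q : Fin n) (f : Bool) :
      c.pc p = Loc.spin → c.prev p = some (q, f) → c.lock p q = false →
      AStep n p [RAcc.rd (Reg.lockR p q)] c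
        { c with pc := Function.update c.pc p Loc.crit }
  | critSkip (c : Conf n) (p : Fin n) :
      c.pc p = Loc.crit → AStep n p [] c c
  | invokeExit (c : Conf n) (p : Fin n) :
      c.pc p = Loc.crit →
      AStep n p [] c { c with pc := Function.update c.pc p Loc.exit1 }
  | exitDone (c : Conf n) (p : Fin n) :
      c.pc p = Loc.exit1 →
      AStep n p [RAcc.wr (Reg.doneR p (c.face p))] c
        { c with pc := Function.update c.pc p Loc.exit2,
                 done := Function.update c.done p
                   (Function.update (c.done p) (c.face p) true) }
  | exitUnlockSome (c : Conf n) (p q : Fin n) :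
      c.pc p = Loc.exit2 → c.succ p (c.face p) = some q →
      AStep n p [RAcc.rd (Reg.succR p (c.face p)), RAcc.wr (Reg.lockR q p)] c
        { c with pc := Function.update c.pc p Loc.idle,
                 lock := Function.update c.lock q
                   (Function.update (c.lock q) p false) }
  | exitUnlockNone (c : Conf n) (p : Fin n) :
      c.pc p = Loc.exit2 → c.succ p (c.face p) = none →
      AStep n p [RAcc.rd (Reg.succR p (c.face p))] c
        { c with pc := Function.update c.pc p Loc.idle }

/-- An infinite execution of `L(M)` with register-access annotations. -/
structure ARun (n : ℕ) where
  conf : ℕ → Conf n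
  sched : ℕ → Fin n
  acc : ℕ → List (RAcc n)
  start : conf 0 = initConf n
  steps : ∀ i, AStep n (sched i) (acc i) (conf i) (conf (i + 1))

/-- Times `i ≤ t ≤ j` span one execution of the Entry operation followed by the
matching Exit operation of process `p`: at time `i` process `p` invokes Enter,
`p` is not back in its remainder section strictly inside the interval, and
after the step at time `j` the Exit operation has returned. -/
def entryExitInterval {n : ℕ} (R : ARun n) (p : Fin n) (i j : ℕ) : Prop :=
  R.sched i = p ∧ (R.conf i).pc p = Loc.idle ∧ (R.conf (i + 1)).pc p = Loc.entry1 ∧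
  (∀ t, i < t → t ≤ j → (R.conf t).pc p ≠ Loc.idle) ∧
  (R.conf (j + 1)).pc p = Loc.idle

/-! ### The distributed shared memory (DSM) model. -/

def regOwner {n : ℕ} : Reg n → Option (Fin n)
  | .X => none
  | .doneR p _ => some p
  | .succR p _ => some p
  | .lockR p _ => some p

/-- DSM RMR cost of a single access by process `p`: each register is forever
assigned to (local to) a single process; any access of a remote register causes
a remote memory reference. -/
def dsmAccCost {n : ℕ} (p : Fin n) (a : RAcc n) : ℕ :=
  if regOwner a.reg = some p then 0 else 1

/-- DSM RMR cost of the step taken at time `i` of the run `R`. -/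
def dsmStepCost {n : ℕ} (R : ARun n) (i : ℕ) : ℕ :=
  ((R.acc i).map (dsmAccCost (R.sched i))).sum

/-! ### Auxiliary lemmas for the proof. -/

/-- A potential function on program locations for RMR accounting. -/
def phiLoc : Loc → ℕ
  | .idle => 0
  | .entry1 => 9
  | .entry2 => 8
  | .trans => 7
  | .lockPred => 7
  | .setSucc => 6
  | .checkDone => 5
  | .spin => 4
  | .crit => 4
  | .exit1 => 3
  | .exit2 => 2

/-- Steps of other processes do not change the pc of `p`. -/
lemma astep_pc_frame {n : ℕ} {q : Fin n} {a : List (RAcc n)} {c c' : Conf n}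
    (h : AStep n q a c c') (p : Fin n) (hpq : q ≠ p) : c'.pc p = c.pc p := by
  cases h <;> simp [Function.update_of_ne (Ne.symm hpq)]

/-- Per-step potential drop bound: the DSM RMR cost of a non-idle step of `p`
is paid by the drop of the potential of its program counter. -/
lemma astep_cost_le {n : ℕ} {p : Fin n} {a : List (RAcc n)} {c c' : Conf n}
    (h : AStep n p a c c') (hn : c.pc p ≠ Loc.idle) :
    (a.map (dsmAccCost p)).sum + phiLoc (c'.pc p) ≤ phiLoc (c.pc p) := by
  cases h with
  | invokeEnter c p hp => exact absurd hp hn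
  | idleSkip c p hp => exact absurd hp hn
  | doneWrite c p hp => simp [hp, dsmAccCost, RAcc.reg, regOwner, phiLoc]
  | succInit c p hp => simp [hp, dsmAccCost, RAcc.reg, regOwner, phiLoc]
  | transAbort c p hp => simp [hp, phiLoc]
  | transSuccess c p hp =>
      rcases eq_or_ne c.X none with h | h <;> simp [hp, h, phiLoc]
  | lockWrite c p q f hp hprev => simp [hp, dsmAccCost, RAcc.reg, regOwner, phiLoc]
  | succWrite c p q f hp hprev =>
      simp only [hp, Function.update_self, phiLoc, List.map_cons, List.map_nil,
        List.sum_cons, List.sum_nil, dsmAccCost, RAcc.reg, regOwner]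
      by_cases hqp : q = p <;> simp [hqp, phiLoc]
  | doneCheckTrue c p q f hp hprev hd =>
      simp only [hp, Function.update_self, phiLoc, List.map_cons, List.map_nil,
        List.sum_cons, List.sum_nil, dsmAccCost, RAcc.reg, regOwner]
      by_cases hqp : q = p <;> simp [hqp, phiLoc]
  | doneCheckFalse c p q f hp hprev hd =>
      simp only [hp, Function.update_self, phiLoc, List.map_cons, List.map_nil,
        List.sum_cons, List.sum_nil, dsmAccCost, RAcc.reg, regOwner]
      by_cases hqp : q = p <;> simp [hqp, phiLoc]
  | spinLocked c p q f hp hprev hl => simp [hp, dsmAccCost, RAcc.reg, regOwner, phiLoc]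
  | spinUnlocked c p q f hp hprev hl => simp [hp, dsmAccCost, RAcc.reg, regOwner, phiLoc]
  | critSkip c p hp => simp [hp, phiLoc]
  | invokeExit c p hp => simp [hp, phiLoc]
  | exitDone c p hp => simp [hp, dsmAccCost, RAcc.reg, regOwner, phiLoc]
  | exitUnlockSome c p q hp hs =>
      simp only [hp, Function.update_self, phiLoc, List.map_cons, List.map_nil,
        List.sum_cons, List.sum_nil, dsmAccCost, RAcc.reg, regOwner]
      by_cases hqp : q = p <;> simp [hqp, phiLoc]
  | exitUnlockNone c p hp => simp [hp, dsmAccCost, RAcc.reg, regOwner, phiLoc]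

/-!
STATEMENT 11.
In the construction `L(M)` of Algorithm 1 from a strictly serializable strongly
progressive TM `M`, every process incurs only `O(1)` RMRs in the DSM model per
execution of the Entry and Exit operations, apart from the RMRs incurred by the
operations of `M` itself: in particular, the register `Lock[p][q]` on which
process `p` spins is local to `p`, so the spin loop incurs no RMRs in the DSM
model.
-/
theorem LM_dsm_constant_rmr :
    -- the spin loop incurs no RMRs in the DSM model
    (∀ (n : ℕ) (R : ARun n) (i : ℕ),
       (R.conf i).pc (R.sched i) = Loc.spin → dsmStepCost R i = 0) ∧
    -- O(1) RMRs per Entry+Exit, apart from the RMRs of the operations of M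
    ∃ c : ℕ, ∀ (n : ℕ) (R : ARun n) (p : Fin n) (i j : ℕ),
      entryExitInterval R p i j →
      (∑ t ∈ Finset.Icc i j, if R.sched t = p then dsmStepCost R t else 0) ≤ c := by
  constructor
  · -- the spin loop incurs no RMRs
    intro n R i hspin
    have h := R.steps i
    generalize hc : R.conf i = c at h hspin
    generalize hc' : R.conf (i + 1) = c' at h
    generalize hs : R.sched i = p at h hspin
    generalize ha : R.acc i = a at h
    cases h <;> simp_all [dsmStepCost, dsmAccCost, RAcc.reg, regOwner, ha]
  · refine ⟨9, fun n R p i j hij => ?_⟩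
    obtain ⟨hsched, hidle, hentry1, hnotidle, _⟩ := hij
    rcases lt_or_ge j i with hji | hij'
    · rw [Finset.Icc_eq_empty (by omega)]; simp
    -- the step at time i is invokeEnter, with no accesses
    have hcost_i : dsmStepCost R i = 0 := by
      have h := R.steps i
      unfold dsmStepCost
      generalize hc : R.conf i = c at h hidle
      generalize hc' : R.conf (i + 1) = c' at h
      generalize ha : R.acc i = a at h ⊢
      rw [hsched] at h ⊢
      cases h <;> simp_all
    -- telescoping potential argument on [i+1, m]
    have key : ∀ m, i ≤ m → m ≤ j →
        (∑ t ∈ Finset.Icc (i + 1) m, if R.sched t = p then dsmStepCost R t else 0)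
          + phiLoc ((R.conf (m + 1)).pc p) ≤ phiLoc ((R.conf (i + 1)).pc p) := by
      intro m him hmj
      induction m with
      | zero =>
        have : i = 0 := Nat.le_zero.mp him
        subst this
        rw [Finset.Icc_eq_empty (by omega)]; simp
      | succ m ih =>
        rcases Nat.lt_or_ge i (m + 1) with hlt | hge
        · -- i ≤ m
          have him' : i ≤ m := by omega
          have ihm := ih him' (by omega)
          rw [Finset.sum_Icc_succ_top (by omega)]
          by_cases hsp : R.sched (m + 1) = p
          · have hstep := R.steps (m + 1)
            rw [hsp] at hstep
            have hnid : (R.conf (m + 1)).pc p ≠ Loc.idle :=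
              hnotidle (m + 1) (by omega) (by omega)
            have hb := astep_cost_le hstep hnid
            have hcc : dsmStepCost R (m + 1)
                = ((R.acc (m + 1)).map (dsmAccCost p)).sum := by
              unfold dsmStepCost; rw [hsp]
            rw [if_pos hsp]
            omega
          · have hstep := R.steps (m + 1)
            have hframe := astep_pc_frame hstep p (by simpa using hsp)
            simp only [if_neg hsp]
            rw [hframe]
            omega
        · -- i = m + 1
          have : i = m + 1 := by omega
          subst this
          rw [Finset.Icc_eq_empty (by omega)]; simp
    have hkey := key j hij' le_rfl
    have hsplit : (∑ t ∈ Finset.Icc i j, if R.sched t = p then dsmStepCost R t else 0)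
        = (if R.sched i = p then dsmStepCost R i else 0)
          + ∑ t ∈ Finset.Icc (i + 1) j, (if R.sched t = p then dsmStepCost R t else 0) := by
      rw [Finset.Icc_eq_cons_Ioc hij', Finset.sum_cons, ← Finset.Icc_add_one_left_eq_Ioc]
    rw [hsplit, hcost_i, if_pos hsched]
    rw [hentry1] at hkey
    simp only [phiLoc] at hkey
    omega
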